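/- Let (g,[·,·],φ) be a regular Hom-Lie algebra. For any integer s, the map ad^s defined by ad^s_x y = [φ^s(x), y] is a representation of g on g with respect to φ. -/

import Mathlib

open LinearMap Module

/-- A (regular, i.e. multiplicative with invertible structure map) Hom-Lie algebra. -/
structure HomLieAlgebra (K g : Type*) [Field K] [AddCommGroup g] [Module K g] where
  bracket : g →ₗ[K] g →ₗ[K] g
  phi : g ≃ₗ[K] g
  skew : ∀ x y, bracket x y = - bracket y x
  phi_bracket : ∀ x y, phi (bracket x y) = bracket (phi x) (phi y)
  jacobi : ∀ x y z,
    bracket (phi x) (bracket y z) + bracket (phi y) (bracket z x)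
      + bracket (phi z) (bracket x y) = 0

variable {K g V : Type*} [Field K] [AddCommGroup g] [Module K g]
  [AddCommGroup V] [Module K V]

/-- `ρ` is a representation of the Hom-Lie algebra `L` on `V` with respect to `β`. -/
def HomLieAlgebra.IsRep (L : HomLieAlgebra K g) (β : V ≃ₗ[K] V)
    (ρ : g →ₗ[K] V →ₗ[K] V) : Prop :=
  (∀ x u, ρ (L.phi x) (β u) = β (ρ x u)) ∧
  (∀ x y u, ρ (L.bracket x y) (β u) = ρ (L.phi x) (ρ y u) - ρ (L.phi y) (ρ x u))

/-- The `φˢ`-adjoint action: `adˢ_x y = [φˢ(x), y]`. -/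
def adS (L : HomLieAlgebra K g) (s : ℤ) (x y : g) : g :=
  L.bracket ((L.phi ^ s) x) y

/-! Since `φˢ` is a bracket automorphism commuting with `φ`, substituting `φˢ x, φˢ y` into the
case `s = 0` gives the general case; and `s = 0` is the Hom-Jacobi identity rewritten with
skew-symmetry. -/

namespace HomLieAlgebra

variable (L : HomLieAlgebra K g)

def bracketAut : Subgroup (g ≃ₗ[K] g) where
  carrier := {e | ∀ x y, e (L.bracket x y) = L.bracket (e x) (e y)}
  mul_mem' {e f} he hf x y := by
    change e (f _) = L.bracket (e (f x)) (e (f y))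
    rw [hf, he]
  one_mem' _ _ := rfl
  inv_mem' {e} he x y := by
    simp only [LinearEquiv.coe_inv]
    apply e.injective
    rw [he, e.apply_symm_apply, e.apply_symm_apply, e.apply_symm_apply]

lemma phi_mem_bracketAut : L.phi ∈ L.bracketAut := L.phi_bracket

lemma phi_zpow_bracket (s : ℤ) (x y : g) :
    (L.phi ^ s) (L.bracket x y) = L.bracket ((L.phi ^ s) x) ((L.phi ^ s) y) :=
  L.bracketAut.zpow_mem L.phi_mem_bracketAut s x y

lemma phi_zpow_phi (s : ℤ) (x : g) : (L.phi ^ s) (L.phi x) = L.phi ((L.phi ^ s) x) :=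
  LinearEquiv.congr_fun (Commute.self_zpow L.phi s).symm x

lemma bracket_bracket_phi (x y z : g) :
    L.bracket (L.bracket x y) (L.phi z)
      = L.bracket (L.phi x) (L.bracket y z) - L.bracket (L.phi y) (L.bracket x z) := by
  have hjacobi := L.jacobi x y z
  rw [L.skew (L.bracket x y), L.skew x z, map_neg]
  linear_combination (norm := abel) -hjacobi

end HomLieAlgebra

theorem adS_isRep (L : HomLieAlgebra K g) (s : ℤ) :
    (∀ x y : g, adS L s (L.phi x) (L.phi y) = L.phi (adS L s x y)) ∧
    (∀ x y z : g, adS L s (L.bracket x y) (L.phi z)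
      = adS L s (L.phi x) (adS L s y z) - adS L s (L.phi y) (adS L s x z)) := by
  refine ⟨fun x y => ?_, fun x y z => ?_⟩
  · simp only [adS, L.phi_zpow_phi, L.phi_bracket]
  · simp only [adS, L.phi_zpow_bracket, L.phi_zpow_phi]
    exact L.bracket_bracket_phi _ _ _
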